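/- Let K ⊂ R^N be compact, let Ω > 0, and set L := ⌈(2N/π)·rad(K)·Ω − 1/2⌉. Then for all x, y ∈ K, ∫_{[0,Ω]^N} ( ∏_{j=1}^N w(j)·cos_Ω( w(j)·(x(j) − y(j)) ) ) dw = 2^{−N} ∫_{[−Ω,Ω]^N} cos_Ω( ⟨w, x − y⟩ ) · | ∏_{j=1}^N w(j) | dw. -/

import Mathlib

open MeasureTheory Real
open scoped RealInnerProductSpace

noncomputable section

/-- The radius of a set: `rad S = sup_{x ∈ S} ‖x‖`. -/
def rad {N : ℕ} (S : Set (EuclideanSpace ℝ (Fin N))) : ℝ :=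
  sSup ((fun x => ‖x‖) '' S)

/-- `L := ⌈(2N/π)·rad(K)·Ω − 1/2⌉`. -/
def Lceil {N : ℕ} (K : Set (EuclideanSpace ℝ (Fin N))) (Ω : ℝ) : ℤ :=
  ⌈(2 * (N : ℝ) / π) * rad K * Ω - 1 / 2⌉

/-- Half-length `(2L+1)·π/2` of the truncation interval. -/
def halfLen {N : ℕ} (K : Set (EuclideanSpace ℝ (Fin N))) (Ω : ℝ) : ℝ :=
  (2 * (Lceil K Ω : ℝ) + 1) * π / 2

/-- Truncated cosine with truncation half-length `T`. -/
def truncCos (T u : ℝ) : ℝ := if |u| ≤ T then Real.cos u else 0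

/-!
On both boxes every phase `w j * (x j - y j)` and `⟪w, x - y⟫` has absolute value at most
`N * Ω * 2 rad K ≤ (2L+1)π/2`, so the truncation is invisible and `cos_Ω` may be replaced by `cos`.
Writing `cos ⟪w, z⟫ * ∏ |w j|` as the real part of `∏ |w j| e^{i w j z j}`, Fubini factors the
right-hand integral into one-dimensional ones, and `∫_{-Ω}^{Ω} |t| e^{itz} = 2 ∫_0^Ω t cos (tz)`
produces the factor `2^N`.
-/

lemma intervalIntegral.integral_neg_self_eq_integral_add_comp_neg {E : Type*}
    [NormedAddCommGroup E] [NormedSpace ℝ E] {f : ℝ → E} (hf : Continuous f) (a : ℝ) :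
    ∫ t in -a..a, f t = ∫ t in 0..a, (f t + f (-t)) := by
  have hneg : IntervalIntegrable (fun t => f (-t)) volume 0 a :=
    (hf.comp continuous_neg).intervalIntegrable _ _
  rw [intervalIntegral.integral_add (hf.intervalIntegrable _ _) hneg,
    intervalIntegral.integral_comp_neg, neg_zero, add_comm,
    intervalIntegral.integral_add_adjacent_intervals (hf.intervalIntegrable _ _)
      (hf.intervalIntegrable _ _)]

open Complex in
lemma integral_Icc_abs_mul_exp_mul_I {a : ℝ} (ha : 0 ≤ a) (z : ℝ) :
    ∫ t in Set.Icc (-a) a, ((|t| : ℝ) : ℂ) * exp (t * z * I) =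
      2 * ((∫ t in Set.Icc 0 a, t * Real.cos (t * z) : ℝ) : ℂ) := by
  rw [integral_Icc_eq_integral_Ioc, ← intervalIntegral.integral_of_le (by linarith),
    integral_Icc_eq_integral_Ioc, ← intervalIntegral.integral_of_le ha,
    intervalIntegral.integral_neg_self_eq_integral_add_comp_neg (by fun_prop),
    ← intervalIntegral.integral_ofReal, ← intervalIntegral.integral_const_mul]
  refine intervalIntegral.integral_congr fun t ht => ?_
  have ht : 0 ≤ t := by rw [Set.uIcc_of_le ha] at ht; exact ht.1
  have hcos : exp (t * z * I) + exp (-t * z * I) = 2 * Real.cos (t * z) := by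
    rw [show -(t : ℂ) * z * I = -(t * z) * I by ring, ← two_cos]
    push_cast; ring_nf
  simp only [Complex.ofReal_neg, abs_neg, abs_of_nonneg ht, ← mul_add, hcos]
  push_cast; ring

lemma abs_le_of_mem_univ_pi_Icc {ι : Type*} {v : ι → ℝ} {a b : ℝ}
    (hv : v ∈ Set.univ.pi fun _ => Set.Icc a b) (hab : -b ≤ a) (j : ι) : |v j| ≤ b :=
  abs_le.mpr ⟨hab.trans (Set.mem_univ_pi.mp hv j).1, (Set.mem_univ_pi.mp hv j).2⟩

section Box

variable {ι : Type*} [Fintype ι]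

lemma sum_abs_mul_le_card_mul {v z : ι → ℝ} {a b : ℝ} (hv : ∀ j, |v j| ≤ a)
    (hz : ∀ j, |z j| ≤ b) : ∑ j, |v j * z j| ≤ Fintype.card ι * (a * b) := by
  calc ∑ j, |v j * z j| ≤ ∑ _j : ι, a * b := Finset.sum_le_sum fun j _ => by
        rw [abs_mul]
        exact mul_le_mul (hv j) (hz j) (abs_nonneg _) ((abs_nonneg _).trans (hv j))
    _ = Fintype.card ι * (a * b) := by simp

lemma setIntegral_univ_pi_prod {𝕜 : Type*} [RCLike 𝕜] (s : ι → Set ℝ) (f : ι → ℝ → 𝕜) :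
    ∫ v in Set.univ.pi s, ∏ i, f i (v i) = ∏ i, ∫ t in s i, f i t := by
  rw [volume_pi, Measure.restrict_pi_pi, integral_fintype_prod_eq_prod]

lemma setIntegral_euclideanSpace_eq_univ_pi {E : Type*} [NormedAddCommGroup E] [NormedSpace ℝ E]
    (s : ι → Set ℝ) (g : (ι → ℝ) → E) :
    ∫ w in {w : EuclideanSpace ℝ ι | ∀ j, w j ∈ s j}, g w.ofLp = ∫ v in Set.univ.pi s, g v := by
  have hset : {w : EuclideanSpace ℝ ι | ∀ j, w j ∈ s j} = WithLp.ofLp ⁻¹' Set.univ.pi s := by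
    ext; simp
  rw [hset]
  exact (PiLp.volume_preserving_ofLp ι).setIntegral_preimage_emb
    (MeasurableEquiv.toLp 2 (ι → ℝ)).symm.measurableEmbedding g _

open Complex in
lemma cos_sum_mul_prod_abs_eq_re (v z : ι → ℝ) :
    Real.cos (∑ j, v j * z j) * ∏ j, |v j| =
      (∏ j, ((|v j| : ℝ) : ℂ) * exp (v j * z j * I)).re := by
  rw [Finset.prod_mul_distrib, ← Complex.exp_sum, ← Finset.sum_mul]
  norm_cast
  rw [Complex.re_ofReal_mul, Complex.exp_ofReal_mul_I_re, mul_comm]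

open Complex in
lemma setIntegral_univ_pi_Icc_cos_sum_mul_prod_abs {a : ℝ} (ha : 0 ≤ a) (z : ι → ℝ) :
    ∫ v in Set.univ.pi fun _ => Set.Icc (-a) a, Real.cos (∑ j, v j * z j) * ∏ j, |v j| =
      2 ^ Fintype.card ι * ∏ j, ∫ t in Set.Icc 0 a, t * Real.cos (t * z j) := by
  set G : ι → ℝ → ℂ := fun j t => ((|t| : ℝ) : ℂ) * exp (t * z j * I)
  have hG : IntegrableOn (fun v : ι → ℝ => ∏ j, G j (v j))
      (Set.univ.pi fun _ => Set.Icc (-a) a) :=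
    ContinuousOn.integrableOn_compact (isCompact_univ_pi fun _ => isCompact_Icc) (by fun_prop)
  calc _ = ∫ v in Set.univ.pi fun _ => Set.Icc (-a) a, (∏ j, G j (v j)).re := by
          simp_rw [cos_sum_mul_prod_abs_eq_re, G]
    _ = (∏ j, ∫ t in Set.Icc (-a) a, G j t).re := by
          rw [← setIntegral_univ_pi_prod]; exact integral_re hG
    _ = _ := by
          simp_rw [G, integral_Icc_abs_mul_exp_mul_I ha, Finset.prod_mul_distrib,
            Finset.prod_const, Finset.card_univ]
          norm_cast

end Box

lemma truncCos_of_abs_le {T u : ℝ} (h : |u| ≤ T) : truncCos T u = Real.cos u := if_pos h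

section Radius

variable {N : ℕ} {K : Set (EuclideanSpace ℝ (Fin N))}

lemma norm_le_rad (hK : IsCompact K) {x : EuclideanSpace ℝ (Fin N)} (hx : x ∈ K) :
    ‖x‖ ≤ rad K :=
  le_csSup (hK.image continuous_norm).bddAbove ⟨x, hx, rfl⟩

lemma two_mul_mul_rad_mul_le_halfLen (Ω : ℝ) : 2 * N * rad K * Ω ≤ halfLen K Ω := by
  have hceil := Int.le_ceil ((2 * (N : ℝ) / π) * rad K * Ω - 1 / 2)
  calc 2 * N * rad K * Ω = ((2 * (N : ℝ) / π) * rad K * Ω - 1 / 2 + 1 / 2) * π := by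
        field_simp
        ring
    _ ≤ (Lceil K Ω + 1 / 2) * π := by gcongr; exact hceil
    _ = halfLen K Ω := by rw [halfLen]; ring

lemma sum_abs_mul_sub_le_halfLen (hK : IsCompact K) {x y : EuclideanSpace ℝ (Fin N)}
    (hx : x ∈ K) (hy : y ∈ K) {Ω : ℝ} {v : Fin N → ℝ} (hv : ∀ j, |v j| ≤ Ω) :
    ∑ j, |v j * (x - y) j| ≤ halfLen K Ω := by
  have hxy (j : Fin N) : |(x - y) j| ≤ 2 * rad K := calc
    |(x - y) j| ≤ ‖x - y‖ := PiLp.norm_apply_le (x - y) j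
    _ ≤ ‖x‖ + ‖y‖ := norm_sub_le x y
    _ ≤ 2 * rad K := by linarith [norm_le_rad hK hx, norm_le_rad hK hy]
  have hsum := sum_abs_mul_le_card_mul hv hxy
  rw [Fintype.card_fin] at hsum
  linarith [two_mul_mul_rad_mul_le_halfLen (K := K) Ω]

end Radius

/-- **Symmetrization identity for the truncated cosine kernel.**
Let `K ⊂ ℝ^N` be compact, `Ω > 0`, and `L := ⌈(2N/π)·rad(K)·Ω − 1/2⌉`.  Then for all
`x, y ∈ K`,
`∫_{[0,Ω]^N} ∏_j w(j)·cos_Ω(w(j)(x(j) − y(j))) dw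
  = 2^{−N} ∫_{[−Ω,Ω]^N} cos_Ω(⟨w, x−y⟩)·|∏_j w(j)| dw`. -/
theorem truncCos_product_integral_identity
    {N : ℕ} (K : Set (EuclideanSpace ℝ (Fin N))) (hK : IsCompact K)
    (Ω : ℝ) (hΩ : 0 < Ω) (x y : EuclideanSpace ℝ (Fin N)) (hx : x ∈ K) (hy : y ∈ K) :
    (∫ w in {w : EuclideanSpace ℝ (Fin N) | ∀ j, w j ∈ Set.Icc (0 : ℝ) Ω},
        ∏ j, w j * truncCos (halfLen K Ω) (w j * (x j - y j))) =
      ((2 : ℝ) ^ N)⁻¹ *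
        ∫ w in {w : EuclideanSpace ℝ (Fin N) | ∀ j, |w j| ≤ Ω},
          truncCos (halfLen K Ω) ⟪w, x - y⟫ * |∏ j, w j| := by
  set T := halfLen K Ω
  have hbound (v : Fin N → ℝ) (hv : ∀ j, |v j| ≤ Ω) : ∑ j, |v j * (x - y) j| ≤ T :=
    sum_abs_mul_sub_le_halfLen hK hx hy hv
  calc _ = ∫ v in Set.univ.pi fun _ => Set.Icc 0 Ω, ∏ j, v j * truncCos T (v j * (x - y) j) :=
        setIntegral_euclideanSpace_eq_univ_pi _ fun v => ∏ j, v j * truncCos T (v j * (x - y) j)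
    _ = ∫ v in Set.univ.pi fun _ => Set.Icc 0 Ω, ∏ j, v j * Real.cos (v j * (x - y) j) :=
        setIntegral_congr_fun (MeasurableSet.univ_pi fun _ => measurableSet_Icc) fun v hv =>
          Finset.prod_congr rfl fun j _ => by
            rw [truncCos_of_abs_le ((Finset.single_le_sum (fun i _ => abs_nonneg _)
              (Finset.mem_univ j)).trans
                (hbound v (abs_le_of_mem_univ_pi_Icc hv (by linarith))))]
    _ = ∏ j, ∫ t in Set.Icc 0 Ω, t * Real.cos (t * (x - y) j) :=
        setIntegral_univ_pi_prod _ fun j t => t * Real.cos (t * (x - y) j)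
    _ = ((2 : ℝ) ^ N)⁻¹ * ∫ v in Set.univ.pi fun _ => Set.Icc (-Ω) Ω,
          Real.cos (∑ j, v j * (x - y) j) * ∏ j, |v j| := by
        rw [setIntegral_univ_pi_Icc_cos_sum_mul_prod_abs hΩ.le, Fintype.card_fin,
          inv_mul_cancel_left₀ (by positivity)]
    _ = ((2 : ℝ) ^ N)⁻¹ * ∫ v in Set.univ.pi fun _ => Set.Icc (-Ω) Ω,
          truncCos T (∑ j, v j * (x - y) j) * |∏ j, v j| := by
        congr 1
        refine setIntegral_congr_fun (MeasurableSet.univ_pi fun _ => measurableSet_Icc)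
          fun v hv => ?_
        rw [truncCos_of_abs_le ((Finset.abs_sum_le_sum_abs _ _).trans
          (hbound v (abs_le_of_mem_univ_pi_Icc hv le_rfl))), Finset.abs_prod]
    _ = _ := by
        rw [← setIntegral_euclideanSpace_eq_univ_pi _
          fun v => truncCos T (∑ j, v j * (x - y) j) * |∏ j, v j|]
        simp only [Set.mem_Icc, ← abs_le, PiLp.inner_apply, RCLike.inner_apply, conj_trivial,
          mul_comm]
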